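/- arXiv:0903.3299 — 2 statements merged into one kernel-verified Lean document; each statement's English description precedes it below -/
import Mathlib

section
/- Let E be a separable Banach space and (S(t))_{t≥0} a strongly continuous semigroup of bounded linear operators on E. Let T > 0 and let f : [0,T] × E → E be such that t ↦ f(t,x) is strongly measurable for each x ∈ E, ‖f(t,x) − f(t,y)‖ ≤ N‖x−y‖ for all t ∈ [0,T] and x, y ∈ E, where N is a constant independent of t, and t ↦ f(t,a) belongs to L¹([0,T];E) for some a ∈ E. Then for every u₀ ∈ E the integral equation u(t) = S(t)u₀ + ∫₀ᵗ S(t−s) f(s,u(s)) ds, t ∈ [0,T], admits a unique solution u ∈ C([0,T];E). -/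
open MeasureTheory Set

/-- Let `E` be a separable Banach space and `S` a strongly continuous
semigroup of bounded linear operators on `E`. Let `T > 0` and `f : [0,T] × E → E` be such
that `t ↦ f t x` is strongly measurable for each `x`, `f` is uniformly Lipschitz in the
second variable with constant `N`, and `t ↦ f t a ∈ L¹([0,T];E)` for some `a`. Then for
every `u₀ ∈ E` the integral equation
`u t = S t u₀ + ∫₀ᵗ S (t-s) (f s (u s))`, `t ∈ [0,T]`,
admits a unique solution `u ∈ C([0,T];E)`. -/
theorem stmt_0
    {E : Type*} [NormedAddCommGroup E] [NormedSpace ℝ E] [CompleteSpace E]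
    [TopologicalSpace.SeparableSpace E]
    (S : ℝ → E →L[ℝ] E)
    (hS0 : S 0 = ContinuousLinearMap.id ℝ E)
    (hSadd : ∀ t s : ℝ, 0 ≤ t → 0 ≤ s → S (t + s) = (S t).comp (S s))
    (hScont : ∀ x : E, ContinuousOn (fun t => S t x) (Set.Ici (0:ℝ)))
    (T : ℝ) (hT : 0 < T)
    (f : ℝ → E → E) (N : ℝ)
    (hfmeas : ∀ x : E, StronglyMeasurable fun t => f t x)
    (hfLip : ∀ t ∈ Set.Icc (0:ℝ) T, ∀ x y : E, ‖f t x - f t y‖ ≤ N * ‖x - y‖)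
    (a : E) (hfa : IntegrableOn (fun t => f t a) (Set.Icc (0:ℝ) T) volume)
    (u₀ : E) :
    ∃ u : ℝ → E, ContinuousOn u (Set.Icc (0:ℝ) T) ∧
      (∀ t ∈ Set.Icc (0:ℝ) T,
        u t = S t u₀ + ∫ s in (0:ℝ)..t, S (t - s) (f s (u s))) ∧
      (∀ v : ℝ → E, ContinuousOn v (Set.Icc (0:ℝ) T) →
        (∀ t ∈ Set.Icc (0:ℝ) T,
          v t = S t u₀ + ∫ s in (0:ℝ)..t, S (t - s) (f s (v s))) →
        ∀ t ∈ Set.Icc (0:ℝ) T, v t = u t) := by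
  classical
  have hT' : (0:ℝ) ≤ T := hT.le
  -- Lipschitz constant, made nonnegative
  set N' : ℝ := max N 0 with hN'def
  have hN'0 : (0:ℝ) ≤ N' := le_max_right _ _
  -- Truncated nonlinearity
  set F : ℝ → E → E := fun t x => Set.indicator (Set.Icc (0:ℝ) T) (fun t' => f t' x) t
    with hFdef
  have hFeq : ∀ t ∈ Set.Icc (0:ℝ) T, ∀ x, F t x = f t x := fun t ht x =>
    Set.indicator_of_mem ht _
  have hFlip : ∀ (t : ℝ) (x y : E), ‖F t x - F t y‖ ≤ N' * ‖x - y‖ := by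
    intro t x y
    by_cases ht : t ∈ Set.Icc (0:ℝ) T
    · rw [hFeq t ht, hFeq t ht]
      exact (hfLip t ht x y).trans
        (mul_le_mul_of_nonneg_right (le_max_left _ _) (norm_nonneg _))
    · simp only [F, Set.indicator_of_notMem ht]
      simpa using mul_nonneg hN'0 (norm_nonneg (x - y))
  have hFcont : ∀ t : ℝ, Continuous fun x => F t x := by
    intro t
    refine (LipschitzWith.of_dist_le_mul (K := N'.toNNReal) fun x y => ?_).continuous
    rw [dist_eq_norm, dist_eq_norm, Real.coe_toNNReal _ hN'0]
    exact hFlip t x y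
  have hFmeas : ∀ x : E, StronglyMeasurable fun t => F t x := fun x =>
    (hfmeas x).indicator measurableSet_Icc
  -- Uniform bound on the operators
  obtain ⟨M₀, hM₀⟩ : ∃ C, ∀ r : Set.Icc (0:ℝ) T, ‖S r‖ ≤ C := by
    refine banach_steinhaus fun x => ?_
    obtain ⟨C, hC⟩ := (isCompact_Icc (a := (0:ℝ)) (b := T)).exists_bound_of_continuousOn
      ((hScont x).mono (Set.Icc_subset_Ici_self))
    exact ⟨C, fun i => hC i i.2⟩
  set M : ℝ := max M₀ 0 with hMdef
  have hM0 : (0:ℝ) ≤ M := le_max_right _ _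
  have hM : ∀ r ∈ Set.Icc (0:ℝ) T, ‖S r‖ ≤ M := fun r hr =>
    (hM₀ ⟨r, hr⟩).trans (le_max_left _ _)
  -- The "stopped" semigroup, continuous in the time variable everywhere
  set S' : ℝ → E →L[ℝ] E := fun r => S (max r 0) with hS'def
  have hS'contx : ∀ x : E, Continuous fun r => S' r x := fun x =>
    (hScont x).comp_continuous (continuous_id.max continuous_const)
      fun r => le_max_right r 0
  have hS'le : ∀ r : ℝ, r ≤ T → ‖S' r‖ ≤ M := fun r hr =>
    hM _ ⟨le_max_right _ _, max_le hr hT'⟩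
  have hS'eq : ∀ r : ℝ, 0 ≤ r → S' r = S r := fun r hr => by
    rw [hS'def]; simp [max_eq_left hr]
  -- measurable structure on E
  haveI : SecondCountableTopology E := UniformSpace.secondCountable_of_separable E
  borelize E
  have hFu : StronglyMeasurable (Function.uncurry fun (x : E) (t : ℝ) => F t x) :=
    stronglyMeasurable_uncurry_of_continuous_of_stronglyMeasurable
      (fun t => hFcont t) (fun x => hFmeas x)
  have hWu : StronglyMeasurable (Function.uncurry fun (x : E) (r : ℝ) => S' r x) :=
    stronglyMeasurable_uncurry_of_continuous_of_stronglyMeasurable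
      (fun r => (S' r).continuous) (fun x => (hS'contx x).stronglyMeasurable)
  -- extension of continuous maps on [0,T] to ℝ
  set ext : C(Set.Icc (0:ℝ) T, E) → ℝ → E :=
    fun χ s => χ (Set.projIcc 0 T hT' s) with hextdef
  have hextcont : ∀ χ, Continuous (ext χ) := fun χ =>
    χ.continuous.comp continuous_projIcc
  have hextval : ∀ χ (t : ℝ) (ht : t ∈ Set.Icc (0:ℝ) T), ext χ t = χ ⟨t, ht⟩ := by
    intro χ t ht
    rw [hextdef]
    simp only
    rw [Set.projIcc_of_mem hT' ht]
  have hextnorm : ∀ χ (s : ℝ), ‖ext χ s‖ ≤ ‖χ‖ := fun χ s =>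
    ContinuousMap.norm_coe_le_norm χ _
  -- the composed nonlinearity
  set g : C(Set.Icc (0:ℝ) T, E) → ℝ → E := fun χ s => F s (ext χ s) with hgdef
  have hgmeas : ∀ χ, StronglyMeasurable (g χ) := fun χ =>
    hFu.comp_measurable (Measurable.prodMk (hextcont χ).measurable measurable_id)
  have hFa_int : IntegrableOn (fun s => F s a) (Set.Icc (0:ℝ) T) volume :=
    hfa.congr_fun (fun s hs => (hFeq s hs a).symm) measurableSet_Icc
  have hg_int : ∀ χ, IntegrableOn (g χ) (Set.Icc (0:ℝ) T) volume := by
    intro χ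
    refine Integrable.mono' (g := fun s => N' * (‖χ‖ + ‖a‖) + ‖F s a‖)
      ((integrable_const _).add hFa_int.norm) ((hgmeas χ).aestronglyMeasurable.restrict)
      (ae_of_all _ fun s => ?_)
    calc ‖g χ s‖ = ‖F s (ext χ s) - F s a + F s a‖ := by rw [sub_add_cancel]
      _ ≤ ‖F s (ext χ s) - F s a‖ + ‖F s a‖ := norm_add_le _ _
      _ ≤ N' * ‖ext χ s - a‖ + ‖F s a‖ := by
          exact add_le_add_left (hFlip s _ _) _
      _ ≤ N' * (‖χ‖ + ‖a‖) + ‖F s a‖ := by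
          refine add_le_add_left (mul_le_mul_of_nonneg_left ?_ hN'0) _
          exact (norm_sub_le _ _).trans (add_le_add_left (hextnorm χ s) _)
  -- the integrand of the Duhamel term
  set K : C(Set.Icc (0:ℝ) T, E) → ℝ → ℝ → E := fun χ t s => S' (t - s) (g χ s)
    with hKdef
  have hKmeas : ∀ χ t, StronglyMeasurable (fun s => K χ t s) := fun χ t =>
    hWu.comp_measurable
      ((hgmeas χ).measurable.prodMk (measurable_const.sub measurable_id))
  have hK_int : ∀ χ t, t ∈ Set.Icc (0:ℝ) T →
      IntegrableOn (K χ t) (Set.Icc (0:ℝ) T) volume := by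
    intro χ t ht
    refine Integrable.mono' ((hg_int χ).norm.const_mul M)
      ((hKmeas χ t).aestronglyMeasurable.restrict) ?_
    filter_upwards [ae_restrict_mem measurableSet_Icc] with s hs
    calc ‖S' (t - s) (g χ s)‖ ≤ ‖S' (t - s)‖ * ‖g χ s‖ := (S' (t-s)).le_opNorm _
      _ ≤ M * ‖g χ s‖ := by
          refine mul_le_mul_of_nonneg_right (hS'le _ ?_) (norm_nonneg _)
          have := hs.1; have := ht.2; linarith
  have hK_ii : ∀ χ t, t ∈ Set.Icc (0:ℝ) T → IntervalIntegrable (K χ t) volume 0 t := by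
    intro χ t ht
    rw [intervalIntegrable_iff_integrableOn_Ioc_of_le ht.1]
    exact (hK_int χ t ht).mono_set
      (Set.Ioc_subset_Icc_self.trans (Set.Icc_subset_Icc_right ht.2))
  -- continuity of the Duhamel term
  have hDuh : ∀ χ, ContinuousOn (fun t => ∫ s in (0:ℝ)..t, K χ t s)
      (Set.Icc (0:ℝ) T) := by
    intro χ
    intro t₀ ht₀
    set Ψ : ℝ → ℝ → E := fun t s => (Set.Ioc (0:ℝ) t).indicator (fun s' => K χ t s') s
      with hΨdef
    have hΨ_apply : ∀ t s : ℝ,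
        Ψ t s = (Set.Ioc (0:ℝ) t).indicator (fun s' => K χ t s') s := fun _ _ => rfl
    have hΨint : ∀ t ∈ Set.Icc (0:ℝ) T,
        (∫ s in (0:ℝ)..t, K χ t s) = ∫ s, Ψ t s := by
      intro t ht
      simp only [hΨ_apply]
      rw [intervalIntegral.integral_of_le ht.1, integral_indicator measurableSet_Ioc]
    have key : Filter.Tendsto (fun t => ∫ s, Ψ t s) (nhdsWithin t₀ (Set.Icc (0:ℝ) T))
        (nhds (∫ s, Ψ t₀ s)) := by
      refine tendsto_integral_filter_of_dominated_convergence
        (fun s => (Set.Ioc (0:ℝ) T).indicator (fun s' => M * ‖g χ s'‖) s)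
        (Filter.Eventually.of_forall fun t =>
          (((hKmeas χ t).indicator measurableSet_Ioc).aestronglyMeasurable)) ?_ ?_ ?_
      · filter_upwards [eventually_mem_nhdsWithin] with t ht
        refine ae_of_all _ fun s => ?_
        by_cases hs : s ∈ Set.Ioc (0:ℝ) t
        · rw [hΨ_apply]
          have hsT : s ∈ Set.Ioc (0:ℝ) T := ⟨hs.1, hs.2.trans ht.2⟩
          rw [Set.indicator_of_mem hs, Set.indicator_of_mem hsT]
          calc ‖S' (t - s) (g χ s)‖ ≤ ‖S' (t - s)‖ * ‖g χ s‖ := (S' (t-s)).le_opNorm _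
            _ ≤ M * ‖g χ s‖ := by
                refine mul_le_mul_of_nonneg_right (hS'le _ ?_) (norm_nonneg _)
                have := hs.1; have := ht.2; linarith
        · rw [hΨ_apply]
          rw [Set.indicator_of_notMem hs, norm_zero]
          exact Set.indicator_apply_nonneg fun _ => by positivity
      · have hgI : IntegrableOn (fun s' => M * ‖g χ s'‖) (Set.Ioc (0:ℝ) T) volume :=
          MeasureTheory.IntegrableOn.mono_set ((hg_int χ).norm.const_mul M)
            Set.Ioc_subset_Icc_self
        exact hgI.integrable_indicator measurableSet_Ioc
      · have hne : ∀ᵐ s : ℝ, s ≠ t₀ := by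
          rw [ae_iff]
          have : {s : ℝ | ¬s ≠ t₀} = {t₀} := by ext s; simp
          rw [this]
          exact measure_singleton t₀
        filter_upwards [hne] with s hs
        rcases le_or_gt s 0 with hs0 | hs0
        · have hzero : ∀ t : ℝ, Ψ t s = 0 := fun t => by
            rw [hΨ_apply]
            exact Set.indicator_of_notMem (fun h => absurd h.1 (not_lt.2 hs0)) _
          rw [hzero t₀]
          simp only [hzero]
          exact tendsto_const_nhds
        · rcases lt_or_gt_of_ne hs with hlt | hgt
          · -- 0 < s < t₀
            have hev : ∀ᶠ t in nhdsWithin t₀ (Set.Icc (0:ℝ) T), s < t :=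
              (eventually_gt_nhds hlt).filter_mono nhdsWithin_le_nhds
            have hmem : s ∈ Set.Ioc (0:ℝ) t₀ := ⟨hs0, hlt.le⟩
            have hΨt₀ : Ψ t₀ s = S' (t₀ - s) (g χ s) := by
              rw [hΨ_apply]
              exact Set.indicator_of_mem hmem _
            rw [hΨt₀]
            have heq : (fun t => S' (t - s) (g χ s)) =ᶠ[nhdsWithin t₀ (Set.Icc (0:ℝ) T)]
                fun t => Ψ t s := by
              filter_upwards [hev] with t hts
              have hmem' : s ∈ Set.Ioc (0:ℝ) t := ⟨hs0, hts.le⟩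
              rw [hΨ_apply]
              exact (Set.indicator_of_mem hmem' (fun s' => K χ t s')).symm
            exact Filter.Tendsto.congr' heq
              (((hS'contx (g χ s)).comp (continuous_id.sub continuous_const)).tendsto t₀
                |>.mono_left nhdsWithin_le_nhds)
          · -- s > t₀
            have hev : ∀ᶠ t in nhdsWithin t₀ (Set.Icc (0:ℝ) T), t < s :=
              (eventually_lt_nhds hgt).filter_mono nhdsWithin_le_nhds
            have hΨt₀ : Ψ t₀ s = 0 := by
              rw [hΨ_apply]
              exact Set.indicator_of_notMem (fun h => absurd h.2 (not_le.2 hgt)) _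
            rw [hΨt₀]
            have heq : (fun _ : ℝ => (0:E)) =ᶠ[nhdsWithin t₀ (Set.Icc (0:ℝ) T)]
                fun t => Ψ t s := by
              filter_upwards [hev] with t hts
              rw [hΨ_apply]
              exact
                (Set.indicator_of_notMem (fun h => absurd h.2 (not_le.2 hts)) _).symm
            exact Filter.Tendsto.congr' heq tendsto_const_nhds
    have : Filter.Tendsto (fun t => ∫ s in (0:ℝ)..t, K χ t s)
        (nhdsWithin t₀ (Set.Icc (0:ℝ) T))
        (nhds (∫ s in (0:ℝ)..t₀, K χ t₀ s)) := by
      rw [hΨint t₀ ht₀]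
      refine key.congr' ?_
      filter_upwards [eventually_mem_nhdsWithin] with t ht
      exact (hΨint t ht).symm
    exact this
  -- the Picard map
  have hΦcont : ∀ χ : C(Set.Icc (0:ℝ) T, E),
      Continuous fun p : Set.Icc (0:ℝ) T =>
        S p u₀ + ∫ s in (0:ℝ)..(p:ℝ), K χ p s := by
    intro χ
    refine Continuous.add ?_ ?_
    · exact (hScont u₀).comp_continuous continuous_subtype_val fun p => p.2.1
    · exact (hDuh χ).comp_continuous continuous_subtype_val fun p => p.2
  set Φ : C(Set.Icc (0:ℝ) T, E) → C(Set.Icc (0:ℝ) T, E) := fun χ =>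
    ⟨fun p => S p u₀ + ∫ s in (0:ℝ)..(p:ℝ), K χ p s, hΦcont χ⟩ with hΦdef
  have hΦ_apply : ∀ χ (p : Set.Icc (0:ℝ) T),
      Φ χ p = S p u₀ + ∫ s in (0:ℝ)..(p:ℝ), K χ p s := fun _ _ => rfl
  -- the basic difference estimate
  have hdiff : ∀ χ₁ χ₂ t, t ∈ Set.Icc (0:ℝ) T →
      ‖(∫ s in (0:ℝ)..t, K χ₁ t s) - ∫ s in (0:ℝ)..t, K χ₂ t s‖ ≤
        ∫ s in (0:ℝ)..t, M * N' * ‖ext χ₁ s - ext χ₂ s‖ := by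
    intro χ₁ χ₂ t ht
    rw [← intervalIntegral.integral_sub (hK_ii χ₁ t ht) (hK_ii χ₂ t ht)]
    refine (intervalIntegral.norm_integral_le_integral_norm ht.1).trans ?_
    refine intervalIntegral.integral_mono_on ht.1
      (((hK_ii χ₁ t ht).sub (hK_ii χ₂ t ht)).norm)
      ((continuous_const.mul (((hextcont χ₁).sub (hextcont χ₂)).norm)).intervalIntegrable
        _ _) (fun s hs => ?_)
    have h1 : K χ₁ t s - K χ₂ t s = S' (t - s) (g χ₁ s - g χ₂ s) :=
      (map_sub (S' (t - s)) _ _).symm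
    rw [h1]
    calc ‖S' (t - s) (g χ₁ s - g χ₂ s)‖ ≤ ‖S' (t - s)‖ * ‖g χ₁ s - g χ₂ s‖ :=
          (S' (t - s)).le_opNorm _
      _ ≤ M * (N' * ‖ext χ₁ s - ext χ₂ s‖) := by
          refine mul_le_mul (hS'le _ ?_) (hFlip s _ _) (norm_nonneg _) hM0
          have := hs.1; have := ht.2; linarith
      _ = M * N' * ‖ext χ₁ s - ext χ₂ s‖ := by ring
  -- iterated estimate
  have hmain : ∀ (n : ℕ) (φ ψ : C(Set.Icc (0:ℝ) T, E)) (t : ℝ), t ∈ Set.Icc (0:ℝ) T →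
      ‖ext (Φ^[n] φ) t - ext (Φ^[n] ψ) t‖ ≤
        (M * N') ^ n * t ^ n / (n.factorial : ℝ) * dist φ ψ := by
    intro n φ ψ
    induction n with
    | zero =>
      intro t ht
      simp only [Function.iterate_zero, id_eq, pow_zero, Nat.factorial_zero,
        Nat.cast_one, one_mul, div_one]
      rw [← dist_eq_norm]
      exact ContinuousMap.dist_apply_le_dist _
    | succ n ih =>
      intro t ht
      have h1 : ext (Φ^[n+1] φ) t - ext (Φ^[n+1] ψ) t =
          (∫ s in (0:ℝ)..t, K (Φ^[n] φ) t s) - ∫ s in (0:ℝ)..t, K (Φ^[n] ψ) t s := by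
        rw [Function.iterate_succ_apply', Function.iterate_succ_apply',
          hextval _ t ht, hextval _ t ht, hΦ_apply, hΦ_apply]
        exact add_sub_add_left_eq_sub _ _ _
      rw [h1]
      have h2 := hdiff (Φ^[n] φ) (Φ^[n] ψ) t ht
      refine h2.trans ?_
      have h3 : (∫ s in (0:ℝ)..t, M * N' * ‖ext (Φ^[n] φ) s - ext (Φ^[n] ψ) s‖) ≤
          ∫ s in (0:ℝ)..t,
            (M * N' * ((M * N') ^ n / (n.factorial : ℝ) * dist φ ψ)) * s ^ n := by
        refine intervalIntegral.integral_mono_on ht.1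
          ((continuous_const.mul
            (((hextcont (Φ^[n] φ)).sub (hextcont (Φ^[n] ψ))).norm)).intervalIntegrable _ _)
          ((continuous_const.mul (continuous_pow n)).intervalIntegrable _ _)
          (fun s hs => ?_)
        have h4 := ih s ⟨hs.1, hs.2.trans ht.2⟩
        calc M * N' * ‖ext (Φ^[n] φ) s - ext (Φ^[n] ψ) s‖ ≤
            M * N' * ((M * N') ^ n * s ^ n / (n.factorial : ℝ) * dist φ ψ) :=
              mul_le_mul_of_nonneg_left h4 (mul_nonneg hM0 hN'0)
          _ = (M * N' * ((M * N') ^ n / (n.factorial : ℝ) * dist φ ψ)) * s ^ n := by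
              ring
      refine h3.trans ?_
      rw [intervalIntegral.integral_const_mul, integral_pow]
      have hfac : ((n+1).factorial : ℝ) = (n+1) * (n.factorial : ℝ) := by
        rw [Nat.factorial_succ]; push_cast; ring
      have hfacne : (n.factorial : ℝ) ≠ 0 := Nat.cast_ne_zero.2 n.factorial_ne_zero
      have hn1 : ((n:ℝ) + 1) ≠ 0 := by positivity
      rw [hfac]
      rw [zero_pow (Nat.succ_ne_zero n)]
      field_simp
      ring_nf
      apply le_of_eq
      ring
  -- find a contracting iterate
  obtain ⟨n₀, hn₀⟩ : ∃ n : ℕ, (M * N' * T) ^ n / (n.factorial : ℝ) < 1 := by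
    have h := FloorSemiring.tendsto_pow_div_factorial_atTop (M * N' * T)
    exact (h.eventually_lt_const one_pos).exists
  have hc0 : (0:ℝ) ≤ (M * N') ^ n₀ * T ^ n₀ / (n₀.factorial : ℝ) := by positivity
  set c : NNReal := Real.toNNReal ((M * N') ^ n₀ * T ^ n₀ / (n₀.factorial : ℝ))
    with hcdef
  have hc_coe : (c : ℝ) = (M * N') ^ n₀ * T ^ n₀ / (n₀.factorial : ℝ) :=
    Real.coe_toNNReal _ hc0
  have hc1 : c < 1 := by
    rw [← Real.toNNReal_one, hcdef]
    refine (Real.toNNReal_lt_toNNReal_iff one_pos).2 ?_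
    rw [mul_pow] at hn₀
    exact hn₀
  have hcontr : ContractingWith c (Φ^[n₀]) := by
    refine ⟨hc1, LipschitzWith.of_dist_le_mul fun φ ψ => ?_⟩
    rw [hc_coe]
    refine (ContinuousMap.dist_le (mul_nonneg hc0 dist_nonneg)).2 fun p => ?_
    have h1 := hmain n₀ φ ψ p.1 p.2
    rw [hextval _ _ p.2, hextval _ _ p.2] at h1
    have hp : (⟨p.1, p.2⟩ : Set.Icc (0:ℝ) T) = p := rfl
    rw [hp] at h1
    rw [dist_eq_norm]
    refine h1.trans ?_
    gcongr
    · exact p.2.1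
    · exact p.2.2
  haveI : Nonempty C(Set.Icc (0:ℝ) T, E) := ⟨ContinuousMap.const _ 0⟩
  set fp : C(Set.Icc (0:ℝ) T, E) := ContractingWith.fixedPoint (Φ^[n₀]) hcontr
    with hfpdef
  have hfix : Function.IsFixedPt (Φ^[n₀]) fp := hcontr.fixedPoint_isFixedPt
  have hΦfp : Φ fp = fp := by
    have h1 : Function.IsFixedPt (Φ^[n₀]) (Φ fp) := by
      show Φ^[n₀] (Φ fp) = Φ fp
      rw [← Function.iterate_succ_apply, Function.iterate_succ_apply', hfix]
    have := hcontr.fixedPoint_unique h1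
    rw [← hfpdef] at this
    exact this
  -- congruence for the integral term
  have hKeq : ∀ (χ : C(Set.Icc (0:ℝ) T, E)) (t : ℝ), t ∈ Set.Icc (0:ℝ) T →
      ∀ w : ℝ → E, (∀ s ∈ Set.Icc (0:ℝ) T, w s = ext χ s) →
      (∫ s in (0:ℝ)..t, K χ t s) = ∫ s in (0:ℝ)..t, S (t - s) (f s (w s)) := by
    intro χ t ht w hw
    refine intervalIntegral.integral_congr fun s hs => ?_
    rw [Set.uIcc_of_le ht.1] at hs
    have hsT : s ∈ Set.Icc (0:ℝ) T := ⟨hs.1, hs.2.trans ht.2⟩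
    rw [hKdef]
    simp only
    rw [hS'eq _ (by linarith [hs.2] : (0:ℝ) ≤ t - s), hgdef]
    simp only
    rw [hFeq s hsT, hw s hsT]
  -- the solution
  refine ⟨ext fp, (hextcont fp).continuousOn, ?_, ?_⟩
  · intro t ht
    have h1 : ext fp t = Φ fp ⟨t, ht⟩ := by rw [hextval _ t ht, hΦfp]
    rw [h1, hΦ_apply]
    congr 1
    exact hKeq fp t ht (ext fp) (fun _ _ => rfl)
  · intro v hv hveq t ht
    set ψ : C(Set.Icc (0:ℝ) T, E) := ⟨Set.restrict _ v, hv.restrict⟩ with hψdef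
    have hψval : ∀ (s : ℝ) (hs : s ∈ Set.Icc (0:ℝ) T), ψ ⟨s, hs⟩ = v s := fun _ _ => rfl
    have hψfix : Function.IsFixedPt Φ ψ := by
      refine ContinuousMap.ext fun p => ?_
      rw [hΦ_apply]
      have h2 : (∫ s in (0:ℝ)..(p:ℝ), K ψ (p:ℝ) s) =
          ∫ s in (0:ℝ)..(p:ℝ), S ((p:ℝ) - s) (f s (v s)) := by
        refine hKeq ψ p p.2 v fun s hs => ?_
        rw [hextval _ s hs, hψval s hs]
      rw [h2, ← hveq p p.2]
      exact (hψval p.1 p.2).trans (by congr)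
    have hψeq : ψ = fp := hcontr.fixedPoint_unique (hψfix.iterate n₀)
    rw [hextval _ t ht, ← hψeq]
    exact (hψval t ht).symm
end

section
/- Let 𝓚 and H be real normed spaces, let i : 𝓚 → H be a compact continuous linear operator, and let S be a set of Borel probability measures on 𝓚 such that sup_{ν ∈ S} ∫_𝓚 ‖x‖_𝓚² dν(x) ≤ C for some constant C < ∞. Then the family of pushforward measures { i_*ν : ν ∈ S } is tight on H, i.e. for every ε > 0 there exists a compact set K ⊆ H with (i_*ν)(H \ K) ≤ ε for all ν ∈ S. -/
open MeasureTheory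
open scoped ENNReal NNReal

/-- Let `𝓚` and `H` be real normed spaces, `i : 𝓚 →L[ℝ] H` a compact
continuous linear operator, and `S` a set of Borel probability measures on `𝓚` with
`sup_{ν ∈ S} ∫ ‖x‖² dν ≤ C` for some finite constant `C`.  Then the family of
pushforward measures `{ i_*ν : ν ∈ S }` is tight on `H`: for every `ε > 0` there is a
compact set `K ⊆ H` with `(i_*ν)(H \ K) ≤ ε` for all `ν ∈ S`. -/
theorem stmt_9
    {𝓚 H : Type*} [NormedAddCommGroup 𝓚] [NormedSpace ℝ 𝓚]
    [NormedAddCommGroup H] [NormedSpace ℝ H]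
    [MeasurableSpace 𝓚] [BorelSpace 𝓚] [MeasurableSpace H] [BorelSpace H]
    (i : 𝓚 →L[ℝ] H) (hi : IsCompactOperator i)
    (S : Set (Measure 𝓚)) (hS : ∀ ν ∈ S, IsProbabilityMeasure ν)
    (C : ℝ) (hC : ∀ ν ∈ S, (∫⁻ x, (‖x‖₊ : ℝ≥0∞) ^ 2 ∂ν) ≤ ENNReal.ofReal C) :
    ∀ ε : ℝ, 0 < ε → ∃ K : Set H, IsCompact K ∧
      ∀ ν ∈ S, ν.map i Kᶜ ≤ ENNReal.ofReal ε := by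
  intro ε hε
  set R : ℝ := Real.sqrt (C / ε) + 1 with hRdef
  have hR0 : 0 < R := by positivity
  have hdiv : C / R ^ 2 ≤ ε := by
    rcases le_or_gt C 0 with hCle | hCpos
    · exact le_trans (div_nonpos_of_nonpos_of_nonneg hCle (by positivity)) hε.le
    · have h1 : C / ε < R ^ 2 := by
        have hs : Real.sqrt (C / ε) ^ 2 = C / ε := Real.sq_sqrt (by positivity)
        nlinarith [Real.sqrt_nonneg (C / ε)]
      rw [div_le_iff₀ (by positivity)]
      calc C = (C / ε) * ε := by field_simp
        _ ≤ R ^ 2 * ε := by nlinarith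
        _ = ε * R ^ 2 := by ring
  set K : Set H := closure (i '' Metric.closedBall 0 R) with hKdef
  have hKcomp : IsCompact K :=
    IsCompactOperator.isCompact_closure_image_closedBall (f := (i : 𝓚 →ₗ[ℝ] H)) hi R
  refine ⟨K, hKcomp, fun ν hν => ?_⟩
  haveI := hS ν hν
  have hmeas : Measurable (i : 𝓚 → H) := i.continuous.measurable
  rw [Measure.map_apply hmeas hKcomp.isClosed.measurableSet.compl]
  have hsub : (i : 𝓚 → H) ⁻¹' Kᶜ ⊆ {x : 𝓚 | (ENNReal.ofReal R) ^ 2 ≤ (‖x‖₊ : ℝ≥0∞) ^ 2} := by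
    intro x hx
    have hxR : R < ‖x‖ := by
      by_contra h
      push_neg at h
      exact hx (subset_closure ⟨x, Metric.mem_closedBall.2 (by simpa using h), rfl⟩)
    have : ENNReal.ofReal R ≤ (‖x‖₊ : ℝ≥0∞) := by
      rw [← enorm_eq_nnnorm, ← ofReal_norm]
      exact ENNReal.ofReal_le_ofReal hxR.le
    exact pow_le_pow_left' this 2
  have hRne : (ENNReal.ofReal R) ^ 2 ≠ 0 := by
    simp [ENNReal.ofReal_eq_zero, not_le, hR0]
  have hRnt : (ENNReal.ofReal R) ^ 2 ≠ ⊤ := by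
    simp [ENNReal.pow_eq_top_iff]
  calc ν ((i : 𝓚 → H) ⁻¹' Kᶜ)
      ≤ ν {x : 𝓚 | (ENNReal.ofReal R) ^ 2 ≤ (‖x‖₊ : ℝ≥0∞) ^ 2} := measure_mono hsub
    _ ≤ (∫⁻ x, (‖x‖₊ : ℝ≥0∞) ^ 2 ∂ν) / (ENNReal.ofReal R) ^ 2 := by
        exact meas_ge_le_lintegral_div
          ((measurable_nnnorm.comp measurable_id).coe_nnreal_ennreal.pow_const 2).aemeasurable
          hRne hRnt
    _ ≤ ENNReal.ofReal C / (ENNReal.ofReal R) ^ 2 :=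
        ENNReal.div_le_div_right (hC ν hν) _
    _ ≤ ENNReal.ofReal ε := by
        rw [← ENNReal.ofReal_pow hR0.le, ← ENNReal.ofReal_div_of_pos (by positivity)]
        exact ENNReal.ofReal_le_ofReal hdiv
end
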